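/- Let A ∈ ℝ^{n×d} have rows aᵢᵀ, let H be symmetric positive definite with AᵀA ⪯ H, πᵢ > 0 with ∑πᵢ = 1, and Q a symmetric positive semidefinite matrix with H^{1/2} Q H^{1/2} ⪯ 6 I. Then ∑_{i=1}^n (aᵢᵀ Q aᵢ)² / πᵢ ≤ 36·ρ_max·d_eff·∑_{i=1}^n aᵢᵀH⁻¹aᵢ ≤ 36·ρ_max·d_eff², where ℓᵢ = aᵢᵀH⁻¹aᵢ, d_eff = ∑ᵢ ℓᵢ, and ρ_max = maxᵢ ℓᵢ/(πᵢ d_eff). -/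

import Mathlib

/-!
Conjugating `H^{1/2} Q H^{1/2} ⪯ 6 I` by `H^{-1/2}` gives `Q ⪯ 6 H⁻¹`, hence
`0 ≤ aᵢᵀ Q aᵢ ≤ 6 ℓᵢ`. Squaring and using `ℓᵢ ≤ ρ_max πᵢ d_eff` bounds each summand
`(aᵢᵀ Q aᵢ)² / πᵢ` by `36 ρ_max d_eff ℓᵢ`; summing over `i` gives the first inequality, and the
second is an equality since `∑ᵢ ℓᵢ = d_eff`.
-/

open Matrix

section

open scoped ComplexOrder

/-- The positive semidefinite square root of a positive semidefinite matrix
(the definition `Matrix.PosSemidef.sqrt` of the older Mathlib, removed since). -/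
noncomputable def Matrix.PosSemidef.sqrt {n : Type*} [Fintype n] [DecidableEq n]
    {𝕜 : Type*} [RCLike 𝕜] {A : Matrix n n 𝕜} (hA : A.PosSemidef) : Matrix n n 𝕜 :=
  hA.1.eigenvectorUnitary.1 * diagonal ((↑) ∘ (Real.sqrt ∘ hA.1.eigenvalues)) *
    (star hA.1.eigenvectorUnitary : Matrix n n 𝕜)

end

open scoped ComplexOrder in
theorem Matrix.PosSemidef.sqrt_mul_self {n : Type*} [Fintype n] [DecidableEq n]
    {𝕜 : Type*} [RCLike 𝕜] {A : Matrix n n 𝕜} (hA : A.PosSemidef) : hA.sqrt * hA.sqrt = A := by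
  have hU : (star hA.1.eigenvectorUnitary : Matrix n n 𝕜) * hA.1.eigenvectorUnitary.1 = 1 :=
    Unitary.coe_star_mul_self _
  have hD : diagonal (((↑) : ℝ → 𝕜) ∘ (Real.sqrt ∘ hA.1.eigenvalues)) *
      diagonal ((↑) ∘ (Real.sqrt ∘ hA.1.eigenvalues)) = diagonal ((↑) ∘ hA.1.eigenvalues) := by
    rw [diagonal_mul_diagonal]
    congr 1
    funext i
    simp only [Function.comp_apply]
    rw [← RCLike.ofReal_mul, Real.mul_self_sqrt (hA.eigenvalues_nonneg i)]
  unfold Matrix.PosSemidef.sqrt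
  conv_rhs => rw [hA.1.spectral_theorem, Unitary.conjStarAlgAut_apply]
  calc _ = hA.1.eigenvectorUnitary.1 * diagonal (((↑) : ℝ → 𝕜) ∘ (Real.sqrt ∘ hA.1.eigenvalues)) *
        ((star hA.1.eigenvectorUnitary : Matrix n n 𝕜) * hA.1.eigenvectorUnitary.1) *
        diagonal ((↑) ∘ (Real.sqrt ∘ hA.1.eigenvalues)) *
        (star hA.1.eigenvectorUnitary : Matrix n n 𝕜) := by simp only [Matrix.mul_assoc]
    _ = _ := by rw [hU, Matrix.mul_one, Matrix.mul_assoc _ (diagonal _) (diagonal _), hD]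

open scoped ComplexOrder in
theorem Matrix.PosSemidef.posSemidef_sqrt {n : Type*} [Fintype n] [DecidableEq n]
    {𝕜 : Type*} [RCLike 𝕜] {A : Matrix n n 𝕜} (hA : A.PosSemidef) : hA.sqrt.PosSemidef := by
  have hD : (diagonal (((↑) : ℝ → 𝕜) ∘ (Real.sqrt ∘ hA.1.eigenvalues))).PosSemidef :=
    posSemidef_diagonal_iff.mpr fun i => RCLike.ofReal_nonneg.mpr (Real.sqrt_nonneg _)
  unfold Matrix.PosSemidef.sqrt
  simpa only [← star_eq_conjTranspose] using hD.mul_mul_conjTranspose_same hA.1.eigenvectorUnitary.1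

/-- Conjugating by `S⁻¹` turns `S Q S ⪯ c I` into `Q ⪯ c (S S)⁻¹`. -/
theorem Matrix.PosSemidef.smul_inv_sub_of_conj {n R : Type*} [Fintype n] [DecidableEq n]
    [Field R] [PartialOrder R] [StarRing R] {S Q : Matrix n n R} (hS : S.IsHermitian)
    (hdet : IsUnit S.det) {c : R} (h : (c • 1 - S * Q * S).PosSemidef) :
    (c • (S * S)⁻¹ - Q).PosSemidef := by
  have hconj := h.conjTranspose_mul_mul_same S⁻¹
  rw [conjTranspose_nonsing_inv, hS.eq] at hconj
  convert hconj using 1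
  rw [Matrix.mul_inv_rev, Matrix.mul_sub, Matrix.sub_mul, Matrix.mul_smul, Matrix.mul_one,
    Matrix.smul_mul, ← Matrix.mul_assoc, mul_nonsing_inv_cancel_right _ _ hdet,
    nonsing_inv_mul_cancel_left _ _ hdet]

theorem Matrix.PosSemidef.dotProduct_mulVec_le_of_sub {n R : Type*} [Fintype n] [Ring R]
    [PartialOrder R] [IsOrderedAddMonoid R] [StarRing R] {M N : Matrix n n R}
    (h : (N - M).PosSemidef) (x : n → R) :
    star x ⬝ᵥ M *ᵥ x ≤ star x ⬝ᵥ N *ᵥ x := by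
  simpa only [sub_mulVec, dotProduct_sub, sub_nonneg] using h.dotProduct_mulVec_nonneg x

theorem sq_div_le_of_le_mul {K : Type*} [Field K] [LinearOrder K] [IsStrictOrderedRing K]
    {x ℓ c π ρ D : K} (hx : 0 ≤ x) (hxℓ : x ≤ c * ℓ) (hℓ : 0 ≤ ℓ) (hℓρ : ℓ ≤ ρ * (π * D))
    (hπ : 0 < π) : x ^ 2 / π ≤ c ^ 2 * ρ * D * ℓ := by
  rw [div_le_iff₀ hπ]
  calc x ^ 2 ≤ (c * ℓ) ^ 2 := pow_le_pow_left₀ hx hxℓ 2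
    _ = c ^ 2 * ℓ * ℓ := by ring
    _ ≤ c ^ 2 * ℓ * (ρ * (π * D)) := by gcongr
    _ = c ^ 2 * ρ * D * ℓ * π := by ring

/-- When `∑ⱼ ℓⱼ = 0` the hypothesis is void (division by zero), but then `ℓᵢ = 0`. -/
theorem le_mul_mul_sum_of_div_le {ι K : Type*} [Fintype ι] [Field K] [LinearOrder K]
    [IsStrictOrderedRing K] {ℓ : ι → K} (hℓ : ∀ j, 0 ≤ ℓ j) {π ρ : K} (hπ : 0 < π) {i : ι}
    (h : ℓ i / (π * ∑ j, ℓ j) ≤ ρ) : ℓ i ≤ ρ * (π * ∑ j, ℓ j) := by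
  rcases (Finset.sum_nonneg fun j _ => hℓ j).eq_or_lt with hzero | hpos
  · have : ℓ i = 0 :=
      (Finset.sum_eq_zero_iff_of_nonneg fun j _ => hℓ j).1 hzero.symm i (Finset.mem_univ i)
    rw [this, ← hzero, mul_zero, mul_zero]
  · exact (div_le_iff₀ (mul_pos hπ hpos)).1 h

theorem sampled_quadform_second_moment_general {n d : ℕ}
    (A : Matrix (Fin n) (Fin d) ℝ)
    (H : Matrix (Fin d) (Fin d) ℝ) (hH : H.PosDef)
    (π : Fin n → ℝ) (hπ : ∀ i, 0 < π i)
    (Q : Matrix (Fin d) (Fin d) ℝ) (hQ : Q.PosSemidef)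
    (hQle : ((6 : ℝ) • (1 : Matrix (Fin d) (Fin d) ℝ) -
      hH.posSemidef.sqrt * Q * hH.posSemidef.sqrt).PosSemidef)
    (ℓ : Fin n → ℝ) (hℓ : ∀ i, ℓ i = A i ⬝ᵥ (H⁻¹ *ᵥ A i))
    (deff : ℝ) (hdeff : deff = ∑ i, ℓ i)
    (ρmax : ℝ) (hρ : ∀ i, ℓ i / (π i * deff) ≤ ρmax) :
    ∑ i, (A i ⬝ᵥ (Q *ᵥ A i)) ^ 2 / π i ≤
        36 * ρmax * deff * ∑ i, A i ⬝ᵥ (H⁻¹ *ᵥ A i) ∧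
    36 * ρmax * deff * (∑ i, A i ⬝ᵥ (H⁻¹ *ᵥ A i)) ≤ 36 * ρmax * deff ^ 2 := by
  have hSS := hH.posSemidef.sqrt_mul_self
  have hdet : IsUnit hH.posSemidef.sqrt.det :=
    (IsUnit.mul_iff.1 (by rw [← det_mul, hSS]; exact (isUnit_iff_isUnit_det H).1 hH.isUnit)).1
  have hQH : ((6 : ℝ) • H⁻¹ - Q).PosSemidef :=
    hSS ▸ hQle.smul_inv_sub_of_conj hH.posSemidef.posSemidef_sqrt.1 hdet
  have hQℓ : ∀ i, A i ⬝ᵥ (Q *ᵥ A i) ≤ 6 * ℓ i := fun i => by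
    simpa [hℓ i, smul_mulVec] using hQH.dotProduct_mulVec_le_of_sub (A i)
  have hQnn : ∀ i, 0 ≤ A i ⬝ᵥ (Q *ᵥ A i) := fun i => by
    simpa using hQ.dotProduct_mulVec_nonneg (A i)
  have hℓnn : ∀ i, 0 ≤ ℓ i := fun i => by
    simpa [hℓ i] using hH.inv.posSemidef.dotProduct_mulVec_nonneg (A i)
  simp only [← hℓ]
  subst hdeff
  refine ⟨?_, (by ring : _ = _).le⟩
  rw [Finset.mul_sum]
  gcongr with i
  simpa only [show (6 : ℝ) ^ 2 = 36 by norm_num] using sq_div_le_of_le_mul (hQnn i) (hQℓ i)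
    (hℓnn i) (le_mul_mul_sum_of_div_le hℓnn (hπ i) (hρ i)) (hπ i)

/-- Second-moment bound on sampled quadratic forms: if `AᵀA ⪯ H`,
`H^{1/2} Q H^{1/2} ⪯ 6 I` for p.s.d. `Q`, `ℓᵢ = aᵢᵀH⁻¹aᵢ`, `d_eff = ∑ ℓᵢ` and
`ρmax` bounds the ratios `ℓᵢ/(πᵢ d_eff)`, then
`∑ᵢ (aᵢᵀQaᵢ)²/πᵢ ≤ 36 ρmax d_eff ∑ᵢ aᵢᵀH⁻¹aᵢ ≤ 36 ρmax d_eff²`. -/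
theorem sampled_quadform_second_moment {n d : ℕ}
    (A : Matrix (Fin n) (Fin d) ℝ)
    (H : Matrix (Fin d) (Fin d) ℝ) (hH : H.PosDef)
    (hAH : (H - Aᵀ * A).PosSemidef)
    (π : Fin n → ℝ) (hπ : ∀ i, 0 < π i) (hsum : ∑ i, π i = 1)
    (Q : Matrix (Fin d) (Fin d) ℝ) (hQ : Q.PosSemidef)
    (hQle : ((6 : ℝ) • (1 : Matrix (Fin d) (Fin d) ℝ) -
      hH.posSemidef.sqrt * Q * hH.posSemidef.sqrt).PosSemidef)
    (ℓ : Fin n → ℝ) (hℓ : ∀ i, ℓ i = A i ⬝ᵥ (H⁻¹ *ᵥ A i))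
    (deff : ℝ) (hdeff : deff = ∑ i, ℓ i)
    (ρmax : ℝ) (hρ : ∀ i, ℓ i / (π i * deff) ≤ ρmax) :
    ∑ i, (A i ⬝ᵥ (Q *ᵥ A i)) ^ 2 / π i ≤
        36 * ρmax * deff * ∑ i, A i ⬝ᵥ (H⁻¹ *ᵥ A i) ∧
    36 * ρmax * deff * (∑ i, A i ⬝ᵥ (H⁻¹ *ᵥ A i)) ≤ 36 * ρmax * deff ^ 2 :=
  sampled_quadform_second_moment_general A H hH π hπ Q hQ hQle ℓ hℓ deff hdeff ρmax hρ
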